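/- arXiv:2309.16563 — 2 statements merged into one kernel-verified Lean document; each statement's English description precedes it below -/
import Mathlib

section
/- For ε ∈ (0,1/2), x ∈ ℝ, and 0 ≤ Δ ≤ Δ_min where Δ_min = 2·Φ⁻¹(1/(2(1-ε))), the corrupted Gaussian divergence satisfies kl^ε_G(x, x+Δ) = 0, i.e., the infimum over corruption pairs H, H' of KL(N(x,1) ⊙_ε H, N(x+Δ,1) ⊙_ε H') is zero. -/
open MeasureTheory ProbabilityTheory Real Set
open scoped ENNReal

noncomputable section

/-- Standard normal probability density function. -/
def stdphi (x : ℝ) : ℝ := (Real.sqrt (2 * Real.pi))⁻¹ * Real.exp (-x ^ 2 / 2)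

/-- Standard normal cumulative distribution function. -/
def stdPhi (x : ℝ) : ℝ := ((gaussianReal 0 1) (Set.Iic x)).toReal

/-- Standard normal quantile function. -/
def stdPhiInv (p : ℝ) : ℝ := sInf {x : ℝ | p ≤ stdPhi x}

/-- Minimum distinction gap under corruption, `Δ_min = 2 Φ⁻¹(1/(2(1-ε)))`. -/
def Dmin (ε : ℝ) : ℝ := 2 * stdPhiInv (1 / (2 * (1 - ε)))

/-- `ε`-corrupted mixture `(1-ε) μ + ε H` of two measures on `ℝ`. -/
def mix (ε : ℝ) (μ H : Measure ℝ) : Measure ℝ :=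
  ENNReal.ofReal (1 - ε) • μ + ENNReal.ofReal ε • H

open Classical in
/-- Kullback–Leibler divergence. -/
def KLdiv (P Q : Measure ℝ) : ℝ≥0∞ :=
  if P ≪ Q ∧ Integrable (fun x => Real.log (P.rnDeriv Q x).toReal) P then
    ENNReal.ofReal (∫ x, Real.log (P.rnDeriv Q x).toReal ∂P) else ⊤

/-- Corrupted Gaussian divergence `kl^ε_G(x, y)`: the infimum over pairs of corruption
distributions of the KL divergence between the corrupted unit-variance Gaussians. -/
def klG (ε x y : ℝ) : ℝ≥0∞ :=
  ⨅ (H : Measure ℝ) (_ : IsProbabilityMeasure H) (H' : Measure ℝ)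
    (_ : IsProbabilityMeasure H'),
    KLdiv (mix ε (gaussianReal x 1) H) (mix ε (gaussianReal y 1) H')

/-- (Lower) median of a probability measure on `ℝ`. -/
def measMed (μ : Measure ℝ) : ℝ := sInf {x : ℝ | 1 / 2 ≤ (μ (Set.Iic x)).toReal}

/-- Quantile function of a probability measure on `ℝ`. -/
def quantile (μ : Measure ℝ) (p : ℝ) : ℝ := sInf {x : ℝ | p ≤ (μ (Set.Iic x)).toReal}

/-- Empirical median of a finite sample. -/
def empMed {n : ℕ} (X : Fin n → ℝ) : ℝ :=
  sInf {x : ℝ | (n : ℝ) ≤ 2 * Nat.card {i : Fin n // X i ≤ x}}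

/-- The variance proxy `s_ε` for the concentration of the median under corruption. -/
def sEps (ε : ℝ) : ℝ :=
  (Real.sqrt (ε / 2 / Real.log (1 / (1 - 2 * ε))) +
      Real.sqrt ((1 - 2 * ε) / (4 * Real.log ((1 - ε) / ε)))) /
    ((1 - ε) * stdphi (Dmin ε / 2 + 1))

/-- Mean of a measure on `ℝ`. -/
def meanOf (μ : Measure ℝ) : ℝ := ∫ x, x ∂μ

/-- Corrupted KL-inf `KL^ε_inf(η, x; L)`. -/
def KLinf (ε : ℝ) (η : Measure ℝ) (x : ℝ) (L : Set (Measure ℝ)) : ℝ≥0∞ :=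
  ⨅ (κ : Measure ℝ) (_ : κ ∈ L) (_ : x ≤ meanOf κ) (H : Measure ℝ)
    (_ : IsProbabilityMeasure H) (H' : Measure ℝ) (_ : IsProbabilityMeasure H'),
    KLdiv (mix ε η H) (mix ε κ H')

/-!
Write `g₀, g_Δ` for the densities of `N(x,1)` and `N(x+Δ,1)`. Pointwise
`g₀ + (g_Δ - g₀)₊ = g_Δ + (g₀ - g_Δ)₊ = max g₀ g_Δ`, so the two corrupted laws coincide as soon as
the adversary can afford the excess: putting `((1-ε)/ε) (g_Δ - g₀)₊` into `H` and
`((1-ε)/ε) (g₀ - g_Δ)₊` into `H'` (topped up by a common remainder) works when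
`(1-ε) ∫ (g_Δ - g₀)₊ ≤ ε`. The excess mass is `2Φ(Δ/2) - 1`, and `Δ/2 ≤ Φ⁻¹(1/(2(1-ε)))` gives
`(1-ε)(2Φ(Δ/2) - 1) ≤ ε` by continuity of `Φ`. Equal laws have divergence `0`.
-/

lemma continuous_cdf (μ : Measure ℝ) [IsProbabilityMeasure μ] [NullSingletonClass μ] :
    Continuous (cdf μ) := by
  refine continuous_iff_continuousAt.2 fun x => ?_
  rw [(cdf μ).mono.continuousAt_iff_leftLim_eq_rightLim, StieltjesFunction.rightLim_eq]
  have hatom := (cdf μ).measure_singleton x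
  rw [measure_cdf, measure_singleton, eq_comm, ENNReal.ofReal_eq_zero, sub_nonpos] at hatom
  exact le_antisymm ((cdf μ).mono.leftLim_le le_rfl) hatom

lemma stdPhi_eq_cdf : stdPhi = cdf (gaussianReal 0 1) := by
  ext x
  rw [cdf_eq_real, stdPhi, measureReal_def]

lemma continuous_stdPhi : Continuous stdPhi := by
  have := nullSingletonClass_gaussianReal (μ := 0) one_ne_zero
  rw [stdPhi_eq_cdf]
  exact continuous_cdf _

lemma gaussianReal_Ici (m c : ℝ) (v : NNReal) :
    gaussianReal m v (Ici c) = gaussianReal 0 v (Iic (m - c)) := by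
  have hmap : (gaussianReal 0 v).map (m - ·) = gaussianReal m v := by
    rw [gaussianReal_map_const_sub, sub_zero]
  rw [← hmap, Measure.map_apply (by fun_prop) measurableSet_Ici]
  congr 1
  ext t
  simp only [mem_preimage, mem_Iic, mem_Ici]
  constructor <;> intro <;> linarith

lemma stdPhi_neg (a : ℝ) : stdPhi (-a) = 1 - stdPhi a := by
  have := nullSingletonClass_gaussianReal (μ := 0) one_ne_zero
  rw [stdPhi, stdPhi, ← zero_sub, ← gaussianReal_Ici, measure_congr Ioi_ae_eq_Ici.symm,
    ← compl_Iic, prob_compl_eq_one_sub measurableSet_Iic,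
    ENNReal.toReal_sub_of_le prob_le_one ENNReal.one_ne_top, ENNReal.toReal_one]

lemma stdPhi_le_of_le_stdPhiInv {p y : ℝ} (hp : 1 / 2 < p) (hy : y ≤ stdPhiInv p) :
    stdPhi y ≤ p := by
  have hbdd : BddBelow {x | p ≤ stdPhi x} := by
    refine ⟨0, fun z hz => ?_⟩
    by_contra! hz0
    have hmono : Monotone stdPhi := stdPhi_eq_cdf ▸ (cdf _).mono
    have hhalf := stdPhi_neg 0
    rw [neg_zero] at hhalf
    linarith [hmono hz0.le, show p ≤ stdPhi z from hz]
  have hlt : Iio (stdPhiInv p) ⊆ {z | stdPhi z ≤ p} := fun z hz =>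
    show stdPhi z ≤ p from (lt_of_not_ge fun hpz => (not_le.2 hz) (csInf_le hbdd hpz)).le
  have := (isClosed_le continuous_stdPhi continuous_const).closure_subset_iff.2 hlt
  rw [closure_Iio] at this
  exact this hy

lemma withDensity_add_withDensity_tsub {α : Type*} [MeasurableSpace α] (μ : Measure α)
    {f g : α → ℝ≥0∞} (hf : Measurable f) (hg : Measurable g) :
    μ.withDensity f + μ.withDensity (g - f) = μ.withDensity g + μ.withDensity (f - g) := by
  rw [← withDensity_add_left hf, ← withDensity_add_left hg]
  congr 1
  funext t
  simp only [Pi.add_apply, Pi.sub_apply, add_tsub_eq_max, max_comm]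

lemma gaussianPDF_le_gaussianPDF_of_sq_le {m₁ m₂ t : ℝ} (v : NNReal)
    (h : (t - m₁) ^ 2 ≤ (t - m₂) ^ 2) : gaussianPDF m₂ v t ≤ gaussianPDF m₁ v t := by
  unfold gaussianPDF gaussianPDFReal
  gcongr ENNReal.ofReal (_ * rexp (-?_ / _))

lemma lintegral_gaussianPDF_tsub {m₁ m₂ : ℝ} (h : m₁ ≤ m₂) {v : NNReal} (hv : v ≠ 0) :
    ∫⁻ t, (gaussianPDF m₂ v - gaussianPDF m₁ v) t =
      gaussianReal m₂ v (Ici ((m₁ + m₂) / 2)) - gaussianReal m₁ v (Ici ((m₁ + m₂) / 2)) := by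
  have hsupp : Function.support (gaussianPDF m₂ v - gaussianPDF m₁ v) ⊆ Ici ((m₁ + m₂) / 2) := by
    intro t ht
    by_contra! htc
    refine ht (tsub_eq_zero_of_le (gaussianPDF_le_gaussianPDF_of_sq_le v ?_))
    nlinarith [mul_nonneg (sub_nonneg.2 h) (sub_nonneg.2 (not_le.1 htc).le)]
  rw [← setLIntegral_eq_of_support_subset hsupp, gaussianReal_apply _ hv, gaussianReal_apply _ hv]
  refine lintegral_sub (measurable_gaussianPDF _ _) ?_ (ae_restrict_of_forall_mem measurableSet_Ici
    fun t ht => gaussianPDF_le_gaussianPDF_of_sq_le v ?_)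
  · rw [← gaussianReal_apply _ hv]
    exact measure_ne_top _ _
  · nlinarith [mul_nonneg (sub_nonneg.2 h) (sub_nonneg.2 (show (m₁ + m₂) / 2 ≤ t from ht))]

lemma exists_mix_eq_mix_of_add_eq {ε : ℝ} (hε : 0 < ε) {μ ν ρ ρ' : Measure ℝ}
    [IsProbabilityMeasure μ] [IsProbabilityMeasure ν] (h : μ + ρ = ν + ρ')
    (hρ : ENNReal.ofReal (1 - ε) * ρ univ ≤ ENNReal.ofReal ε) :
    ∃ H H' : Measure ℝ, IsProbabilityMeasure H ∧ IsProbabilityMeasure H' ∧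
      mix ε μ H = mix ε ν H' := by
  simp only [mix]
  set a := ENNReal.ofReal (1 - ε)
  set b := ENNReal.ofReal ε
  have hba : b * (a / b) = a :=
    ENNReal.mul_div_cancel (ENNReal.ofReal_ne_zero_iff.2 hε) ENNReal.ofReal_ne_top
  have hr : a / b * ρ univ ≤ 1 := by
    rw [← ENNReal.mul_div_right_comm]
    exact ENNReal.div_le_of_le_mul (by rwa [one_mul])
  set r := a / b * ρ univ
  have hρρ' : ρ univ = ρ' univ := by
    simpa [ENNReal.add_right_inj ENNReal.one_ne_top] using congrArg (· univ) h
  have hprob (κ : Measure ℝ) (hκ : κ univ = ρ univ) :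
      IsProbabilityMeasure ((a / b) • κ + (1 - r) • μ) := by
    constructor
    simp only [Measure.add_apply, Measure.smul_apply, smul_eq_mul, hκ, measure_univ, mul_one]
    exact add_tsub_cancel_of_le hr
  refine ⟨(a / b) • ρ + (1 - r) • μ, (a / b) • ρ' + (1 - r) • μ, hprob ρ rfl,
    hprob ρ' hρρ'.symm, ?_⟩
  calc a • μ + b • ((a / b) • ρ + (1 - r) • μ) = a • (μ + ρ) + (b * (1 - r)) • μ := by
        simp only [smul_add, smul_smul, hba]; abel
    _ = a • (ν + ρ') + (b * (1 - r)) • μ := by rw [h]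
    _ = a • ν + b • ((a / b) • ρ' + (1 - r) • μ) := by
        simp only [smul_add, smul_smul, hba]; abel

instance (ε : ℝ) (μ H : Measure ℝ) [IsFiniteMeasure μ] [IsFiniteMeasure H] :
    IsFiniteMeasure (mix ε μ H) :=
  ⟨by simp [mix, ENNReal.mul_lt_top]⟩

lemma KLdiv_self (P : Measure ℝ) [SigmaFinite P] : KLdiv P P = 0 := by
  have hlog : (fun x => Real.log (P.rnDeriv P x).toReal) =ᵐ[P] 0 := by
    filter_upwards [P.rnDeriv_self] with x hx
    simp [hx]
  rw [KLdiv, if_pos ⟨.rfl, (integrable_zero _ _ _).congr hlog.symm⟩, integral_congr_ae hlog]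
  simp

lemma ofReal_one_sub_mul_lintegral_gaussianPDF_tsub_le {ε Δ : ℝ} (hε₀ : 0 < ε) (hε₁ : ε < 1)
    (hΔ₀ : 0 ≤ Δ) (hΔ : Δ ≤ Dmin ε) (x : ℝ) :
    ENNReal.ofReal (1 - ε) * ∫⁻ t, (gaussianPDF (x + Δ) 1 - gaussianPDF x 1) t ≤
      ENNReal.ofReal ε := by
  have hΦ : stdPhi (Δ / 2) ≤ 1 / (2 * (1 - ε)) := by
    refine stdPhi_le_of_le_stdPhiInv ?_ (by rw [Dmin] at hΔ; linarith)
    rw [lt_one_div (by norm_num) (by linarith)]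
    linarith
  replace hΦ : stdPhi (Δ / 2) * (2 * (1 - ε)) ≤ 1 := (le_div_iff₀ (by linarith)).1 hΦ
  have hΦ_nonneg (a : ℝ) : 0 ≤ stdPhi a := ENNReal.toReal_nonneg
  have hN (a : ℝ) : gaussianReal 0 1 (Iic a) = ENNReal.ofReal (stdPhi a) :=
    (ENNReal.ofReal_toReal (measure_ne_top _ _)).symm
  rw [lintegral_gaussianPDF_tsub (by linarith) one_ne_zero, gaussianReal_Ici, gaussianReal_Ici,
    show x + Δ - (x + (x + Δ)) / 2 = Δ / 2 by ring, show x - (x + (x + Δ)) / 2 = -(Δ / 2) by ring,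
    hN, hN, ← ENNReal.ofReal_sub _ (hΦ_nonneg _), stdPhi_neg, ← ENNReal.ofReal_mul (by linarith)]
  exact ENNReal.ofReal_le_ofReal (by nlinarith)

/-- the corrupted Gaussian divergence vanishes below the minimum gap. -/
theorem klG_eq_zero_of_le_Dmin (ε x Δ : ℝ) (hε : ε ∈ Set.Ioo (0 : ℝ) (1 / 2))
    (h0 : 0 ≤ Δ) (h1 : Δ ≤ Dmin ε) :
    klG ε x (x + Δ) = 0 := by
  have hdecomp := withDensity_add_withDensity_tsub volume
    (measurable_gaussianPDF x 1) (measurable_gaussianPDF (x + Δ) 1)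
  rw [← gaussianReal_of_var_ne_zero _ one_ne_zero, ← gaussianReal_of_var_ne_zero _ one_ne_zero]
    at hdecomp
  obtain ⟨H, H', hH, hH', hmix⟩ := exists_mix_eq_mix_of_add_eq hε.1 hdecomp (by
    rw [withDensity_apply _ MeasurableSet.univ, Measure.restrict_univ]
    exact ofReal_one_sub_mul_lintegral_gaussianPDF_tsub_le hε.1 (by linarith [hε.2]) h0 h1 x)
  refine le_antisymm ?_ zero_le
  calc klG ε x (x + Δ) ≤ KLdiv (mix ε (gaussianReal x 1) H) (mix ε (gaussianReal (x + Δ) 1) H') :=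
        iInf₂_le_of_le H hH (iInf₂_le H' hH')
    _ = 0 := by rw [hmix, KLdiv_self]
end
end

section
/- For Δ > Δ_min, the normalisation constant c = c(Δ) solving 1/(1-ε) = c·Φ(Δ₋/2) + Φ(Δ₊/2) is differentiable in Δ with derivative c'(Δ) = -c(Δ)·φ(Δ₋/2)/Φ(Δ₋/2). Moreover ∂Δ₊/∂Δ = Δ₋/Δ - 2c'/(Δc) and ∂Δ₋/∂Δ = Δ₊/Δ + 2c'/(Δc). -/
/-!
The constant is cut out implicitly by `G(Δ, c(Δ)) = 1/(1-ε)` with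
`G(Δ, t) = t Φ(Δ₋/2) + Φ(Δ₊/2)`. Since `Δ₊² - Δ₋² = 8 log (1/t)`, we have
`t φ(Δ₋/2) = φ(Δ₊/2)`, which collapses the partial derivatives of `G` to
`∂G/∂Δ = t φ(Δ₋/2)` and `∂G/∂t = Φ(Δ₋/2) > 0`. So `G(Δ, ·)` is strictly increasing, `c` agrees
near `Δ` with the function given by the implicit function theorem, and `c' = -∂G/∂Δ / ∂G/∂t`.
The derivatives of `Δ₊` and `Δ₋` along `c` follow by the chain rule; `Δ_min ≥ 0` keeps the
domain away from the singularity `Δ = 0`.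
-/

open MeasureTheory ProbabilityTheory Real Set
open scoped ENNReal

noncomputable section

open Filter Topology

lemma stdphi_eq_gaussianPDFReal : stdphi = gaussianPDFReal 0 1 := by
  ext x
  simp [stdphi, gaussianPDFReal, neg_div]

lemma stdphi_pos (x : ℝ) : 0 < stdphi x := by
  unfold stdphi
  positivity

lemma stdphi_neg (x : ℝ) : stdphi (-x) = stdphi x := by
  simp [stdphi]

lemma continuous_stdphi : Continuous stdphi := by
  unfold stdphi
  fun_prop

lemma integrable_stdphi : Integrable stdphi :=
  stdphi_eq_gaussianPDFReal ▸ integrable_gaussianPDFReal 0 1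

lemma stdPhi_eq_integral (x : ℝ) : stdPhi x = ∫ t in Iic x, stdphi t := by
  rw [stdPhi, gaussianReal_apply_eq_integral _ one_ne_zero, ENNReal.toReal_ofReal,
    stdphi_eq_gaussianPDFReal]
  exact setIntegral_nonneg measurableSet_Iic fun t _ => gaussianPDFReal_nonneg 0 1 t

lemma hasStrictDerivAt_stdPhi (x : ℝ) : HasStrictDerivAt stdPhi (stdphi x) x := by
  have hΦ : stdPhi = fun y => stdPhi 0 + ∫ t in (0 : ℝ)..y, stdphi t := by
    ext y
    rw [stdPhi_eq_integral, stdPhi_eq_integral, ← intervalIntegral.integral_Iic_sub_Iic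
      integrable_stdphi.integrableOn integrable_stdphi.integrableOn]
    ring
  rw [hΦ]
  exact (intervalIntegral.integral_hasStrictDerivAt_right integrable_stdphi.intervalIntegrable
    (continuous_stdphi.stronglyMeasurableAtFilter _ _) continuous_stdphi.continuousAt).const_add _

lemma stdPhi_strictMono : StrictMono stdPhi :=
  strictMono_of_hasDerivAt_pos (fun x => (hasStrictDerivAt_stdPhi x).hasDerivAt) stdphi_pos

lemma stdPhi_pos (x : ℝ) : 0 < stdPhi x :=
  (ENNReal.toReal_nonneg : 0 ≤ stdPhi (x - 1)).trans_lt (stdPhi_strictMono (sub_one_lt x))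

lemma stdPhi_zero : stdPhi 0 = 1 / 2 := by
  have hsymm : ∫ t in Iic 0, stdphi t = ∫ t in Ioi 0, stdphi t := by
    simpa [stdphi_neg] using integral_comp_neg_Iic 0 stdphi
  have htotal : (∫ t in Iic 0, stdphi t) + ∫ t in Ioi 0, stdphi t = 1 := by
    rw [intervalIntegral.integral_Iic_add_Ioi integrable_stdphi.integrableOn
      integrable_stdphi.integrableOn, stdphi_eq_gaussianPDFReal,
      integral_gaussianPDFReal_eq_one 0 one_ne_zero]
  rw [stdPhi_eq_integral]
  linarith

lemma stdPhiInv_nonneg {p : ℝ} (hp : 1 / 2 < p) : 0 ≤ stdPhiInv p :=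
  Real.sInf_nonneg fun x (hx : p ≤ stdPhi x) => not_lt.1 fun hneg =>
    hp.not_ge (stdPhi_zero ▸ hx.trans (stdPhi_strictMono hneg).le)

lemma Dmin_nonneg {ε : ℝ} (h₀ : 0 < ε) (h₁ : ε < 1) : 0 ≤ Dmin ε := by
  have hp : 1 / 2 < 1 / (2 * (1 - ε)) :=
    one_div_lt_one_div_of_lt (by linarith) (by linarith)
  exact mul_nonneg zero_le_two (stdPhiInv_nonneg hp)

theorem HasStrictFDerivAt.hasStrictDerivAt_of_eventually_apply_eq
    {𝕜 : Type*} [NontriviallyNormedField 𝕜] [CompleteSpace 𝕜]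
    {G : 𝕜 × 𝕜 → 𝕜} {a b x₀ y₀ : 𝕜} {f : 𝕜 → 𝕜} {s : Set 𝕜}
    (hG : HasStrictFDerivAt G
      (a • ContinuousLinearMap.fst 𝕜 𝕜 𝕜 + b • ContinuousLinearMap.snd 𝕜 𝕜 𝕜) (x₀, y₀))
    (hb : b ≠ 0) (hs : s ∈ 𝓝 y₀) (hinj : ∀ᶠ x in 𝓝 x₀, InjOn (fun y => G (x, y)) s)
    (hf : ∀ᶠ x in 𝓝 x₀, f x ∈ s ∧ G (x, f x) = G (x₀, y₀)) :
    HasStrictDerivAt f (-(a / b)) x₀ := by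
  have hinv : ((a • ContinuousLinearMap.fst 𝕜 𝕜 𝕜 + b • ContinuousLinearMap.snd 𝕜 𝕜 𝕜) ∘L
      ContinuousLinearMap.inr 𝕜 𝕜 𝕜).IsInvertible :=
    ⟨ContinuousLinearEquiv.unitsEquivAut 𝕜 (Units.mk0 b hb), by ext; simp⟩
  set ψ := hG.implicitFunctionOfProdDomain hinv
  obtain ⟨ψ', hψ'⟩ : ∃ ψ', HasStrictDerivAt ψ ψ' x₀ :=
    ⟨_, (hG.hasStrictFDerivAt_implicitFunctionOfProdDomain hinv).hasStrictDerivAt⟩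
  have hψx₀ : ψ x₀ = y₀ :=
    (hG.eventually_apply_eq_iff_implicitFunctionOfProdDomain hinv).self_of_nhds.mp rfl
  have hψ_sol : ∀ᶠ x in 𝓝 x₀, G (x, ψ x) = G (x₀, y₀) :=
    hG.eventually_apply_implicitFunctionOfProdDomain hinv
  have hψ_mem : ∀ᶠ x in 𝓝 x₀, ψ x ∈ s := hG.tendsto_implicitFunctionOfProdDomain hinv hs
  have hψf : ψ =ᶠ[𝓝 x₀] f := by
    filter_upwards [hinj, hf, hψ_sol, hψ_mem] with x hx hfx hψx hψs
    exact hx hψs hfx.1 (hψx.trans hfx.2.symm)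
  -- along the level curve `x ↦ (x, ψ x)` the derivative `a + b ψ'` of `G` vanishes
  have hlevel : HasDerivAt (fun x => G (x, ψ x)) (a + b * ψ') x₀ := by
    have hcurve := (hasDerivAt_id x₀).prodMk hψ'.hasDerivAt
    rw [← hψx₀] at hG
    exact (hG.hasFDerivAt.comp_hasDerivAt x₀ hcurve).congr_deriv (by simp)
  have hzero : a + b * ψ' = 0 :=
    hlevel.unique ((hasDerivAt_const x₀ (G (x₀, y₀))).congr_of_eventuallyEq hψ_sol)
  have hψ'_eq : ψ' = -(a / b) := by field_simp; linear_combination hzero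
  exact hψ'_eq ▸ hψ'.congr_of_eventuallyEq hψf

-- The paper's `Δ₊` and `Δ₋`, with `t` in place of `c(Δ)`.
def deltaPlus (Δ t : ℝ) : ℝ := Δ + 2 / Δ * Real.log (1 / t)

def deltaMinus (Δ t : ℝ) : ℝ := Δ - 2 / Δ * Real.log (1 / t)

def normalisationFun (Δ t : ℝ) : ℝ :=
  t * stdPhi (deltaMinus Δ t / 2) + stdPhi (deltaPlus Δ t / 2)

lemma mul_stdphi_deltaMinus {Δ t : ℝ} (hΔ : Δ ≠ 0) (ht : 0 < t) :
    t * stdphi (deltaMinus Δ t / 2) = stdphi (deltaPlus Δ t / 2) := by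
  have hexp : Real.log t + -(deltaMinus Δ t / 2) ^ 2 / 2 = -(deltaPlus Δ t / 2) ^ 2 / 2 := by
    simp only [deltaPlus, deltaMinus, one_div, Real.log_inv]
    field_simp
    ring
  rw [stdphi, stdphi, ← hexp, Real.exp_add, Real.exp_log ht]
  ring

lemma hasStrictFDerivAt_two_div_mul_log_one_div {Δ t : ℝ} (hΔ : Δ ≠ 0) (ht : t ≠ 0) :
    HasStrictFDerivAt (fun p : ℝ × ℝ => 2 / p.1 * Real.log (1 / p.2))
      ((-(2 / Δ ^ 2 * Real.log (1 / t))) • ContinuousLinearMap.fst ℝ ℝ ℝ +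
        (-(2 / (Δ * t))) • ContinuousLinearMap.snd ℝ ℝ ℝ) (Δ, t) := by
  have hdiv : HasStrictDerivAt (fun x : ℝ => 2 / x) (-(2 / Δ ^ 2)) Δ := by
    simpa [div_eq_mul_inv, neg_div] using (hasStrictDerivAt_inv hΔ).const_mul 2
  have hlog : HasStrictDerivAt (fun x : ℝ => Real.log (1 / x)) (-t⁻¹) t := by
    have := (Real.hasStrictDerivAt_log ht).neg
    simp only [one_div, Real.log_inv]
    exact this
  refine ((hdiv.comp_hasStrictFDerivAt (f := Prod.fst) (Δ, t) hasStrictFDerivAt_fst).mul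
    (hlog.comp_hasStrictFDerivAt (f := Prod.snd) (Δ, t) hasStrictFDerivAt_snd)).congr_fderiv ?_
  ext <;> simp <;> field_simp

lemma hasStrictFDerivAt_deltaPlus {Δ t : ℝ} (hΔ : Δ ≠ 0) (ht : t ≠ 0) :
    HasStrictFDerivAt (fun p : ℝ × ℝ => deltaPlus p.1 p.2)
      ((deltaMinus Δ t / Δ) • ContinuousLinearMap.fst ℝ ℝ ℝ +
        (-(2 / (Δ * t))) • ContinuousLinearMap.snd ℝ ℝ ℝ) (Δ, t) := by
  refine (hasStrictFDerivAt_fst.add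
    (hasStrictFDerivAt_two_div_mul_log_one_div hΔ ht)).congr_fderiv ?_
  ext
  · simp [deltaMinus]
    field_simp
  · simp

lemma hasStrictFDerivAt_deltaMinus {Δ t : ℝ} (hΔ : Δ ≠ 0) (ht : t ≠ 0) :
    HasStrictFDerivAt (fun p : ℝ × ℝ => deltaMinus p.1 p.2)
      ((deltaPlus Δ t / Δ) • ContinuousLinearMap.fst ℝ ℝ ℝ +
        (2 / (Δ * t)) • ContinuousLinearMap.snd ℝ ℝ ℝ) (Δ, t) := by
  refine (hasStrictFDerivAt_fst.sub
    (hasStrictFDerivAt_two_div_mul_log_one_div hΔ ht)).congr_fderiv ?_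
  ext
  · simp [deltaPlus]
    field_simp
    ring
  · simp

lemma hasStrictFDerivAt_normalisationFun {Δ t : ℝ} (hΔ : Δ ≠ 0) (ht : 0 < t) :
    HasStrictFDerivAt (fun p : ℝ × ℝ => normalisationFun p.1 p.2)
      ((t * stdphi (deltaMinus Δ t / 2)) • ContinuousLinearMap.fst ℝ ℝ ℝ +
        stdPhi (deltaMinus Δ t / 2) • ContinuousLinearMap.snd ℝ ℝ ℝ) (Δ, t) := by
  have hΦhalf (x : ℝ) : HasStrictDerivAt (fun y => stdPhi (y / 2)) (stdphi (x / 2) / 2) x := by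
    refine ((hasStrictDerivAt_stdPhi (x / 2)).comp x
      ((hasStrictDerivAt_id x).div_const 2)).congr_deriv ?_
    ring
  have hΦminus := (hΦhalf _).comp_hasStrictFDerivAt (f := fun p : ℝ × ℝ => deltaMinus p.1 p.2)
    (Δ, t) (hasStrictFDerivAt_deltaMinus hΔ ht.ne')
  have hΦplus := (hΦhalf _).comp_hasStrictFDerivAt (f := fun p : ℝ × ℝ => deltaPlus p.1 p.2)
    (Δ, t) (hasStrictFDerivAt_deltaPlus hΔ ht.ne')
  refine ((hasStrictFDerivAt_snd.mul hΦminus).add hΦplus).congr_fderiv ?_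
  rw [← mul_stdphi_deltaMinus hΔ ht]
  ext <;> simp [deltaPlus, deltaMinus] <;> field_simp <;> ring

lemma hasDerivAt_normalisationFun {Δ t : ℝ} (hΔ : Δ ≠ 0) (ht : 0 < t) :
    HasDerivAt (normalisationFun Δ) (stdPhi (deltaMinus Δ t / 2)) t :=
  ((hasStrictFDerivAt_normalisationFun hΔ ht).hasFDerivAt.comp_hasDerivAt t
    ((hasDerivAt_const t Δ).prodMk (hasDerivAt_id t))).congr_deriv (by simp)

lemma strictMonoOn_normalisationFun {Δ : ℝ} (hΔ : Δ ≠ 0) :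
    StrictMonoOn (normalisationFun Δ) (Ioi 0) :=
  strictMonoOn_of_hasDerivWithinAt_pos (convex_Ioi 0)
    (fun _ ht => (hasDerivAt_normalisationFun hΔ ht).continuousAt.continuousWithinAt)
    (fun _ ht => (hasDerivAt_normalisationFun hΔ (interior_subset ht)).hasDerivWithinAt)
    (fun _ _ => stdPhi_pos _)

lemma hasDerivAt_deltaPlus_comp {c : ℝ → ℝ} {c' Δ : ℝ} (hΔ : Δ ≠ 0) (hc : HasDerivAt c c' Δ)
    (hcΔ : c Δ ≠ 0) :
    HasDerivAt (fun d => deltaPlus d (c d)) (deltaMinus Δ (c Δ) / Δ - 2 * c' / (Δ * c Δ)) Δ := by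
  have h := (hasStrictFDerivAt_deltaPlus hΔ hcΔ).hasFDerivAt.comp_hasDerivAt Δ
    ((hasDerivAt_id' Δ).prodMk hc)
  exact h.congr_deriv (by simp; field_simp; ring)

lemma hasDerivAt_deltaMinus_comp {c : ℝ → ℝ} {c' Δ : ℝ} (hΔ : Δ ≠ 0) (hc : HasDerivAt c c' Δ)
    (hcΔ : c Δ ≠ 0) :
    HasDerivAt (fun d => deltaMinus d (c d)) (deltaPlus Δ (c Δ) / Δ + 2 * c' / (Δ * c Δ)) Δ := by
  have h := (hasStrictFDerivAt_deltaMinus hΔ hcΔ).hasFDerivAt.comp_hasDerivAt Δ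
    ((hasDerivAt_id' Δ).prodMk hc)
  exact h.congr_deriv (by simp; field_simp)

/-- derivative of the normalisation constant `c(Δ)` and of `Δ₊`, `Δ₋`. -/
theorem normalisation_constant_hasDerivAt (ε : ℝ) (c : ℝ → ℝ)
    (hε : ε ∈ Set.Ioo (0 : ℝ) (1 / 2))
    (hc : ∀ Δ : ℝ, Dmin ε < Δ → 0 < c Δ ∧
      1 / (1 - ε) =
        c Δ * stdPhi ((Δ - 2 / Δ * Real.log (1 / c Δ)) / 2) +
          stdPhi ((Δ + 2 / Δ * Real.log (1 / c Δ)) / 2)) :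
    ∀ Δ : ℝ, Dmin ε < Δ →
      HasDerivAt c
          (-(c Δ * stdphi ((Δ - 2 / Δ * Real.log (1 / c Δ)) / 2) /
            stdPhi ((Δ - 2 / Δ * Real.log (1 / c Δ)) / 2))) Δ ∧
        HasDerivAt (fun d => d + 2 / d * Real.log (1 / c d))
          ((Δ - 2 / Δ * Real.log (1 / c Δ)) / Δ - 2 * deriv c Δ / (Δ * c Δ)) Δ ∧
        HasDerivAt (fun d => d - 2 / d * Real.log (1 / c d))
          ((Δ + 2 / Δ * Real.log (1 / c Δ)) / Δ + 2 * deriv c Δ / (Δ * c Δ)) Δ := by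
  intro Δ hΔ
  have hΔ₀ : Δ ≠ 0 := ((Dmin_nonneg hε.1 (by linarith [hε.2])).trans_lt hΔ).ne'
  have hcΔ : 0 < c Δ := (hc Δ hΔ).1
  have hsol : ∀ᶠ d in 𝓝 Δ, c d ∈ Ioi 0 ∧ normalisationFun d (c d) = normalisationFun Δ (c Δ) := by
    filter_upwards [Ioi_mem_nhds hΔ] with d hd
    exact ⟨(hc d hd).1, (hc d hd).2.symm.trans (hc Δ hΔ).2⟩
  have hinj : ∀ᶠ d in 𝓝 Δ, InjOn (normalisationFun d) (Ioi 0) :=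
    (eventually_ne_nhds hΔ₀).mono fun d hd => (strictMonoOn_normalisationFun hd).injOn
  have hderiv : HasDerivAt c _ Δ :=
    ((hasStrictFDerivAt_normalisationFun hΔ₀ hcΔ).hasStrictDerivAt_of_eventually_apply_eq
      (stdPhi_pos _).ne' (Ioi_mem_nhds hcΔ) hinj hsol).hasDerivAt
  have hc' := hderiv.differentiableAt.hasDerivAt
  exact ⟨hderiv, hasDerivAt_deltaPlus_comp hΔ₀ hc' hcΔ.ne',
    hasDerivAt_deltaMinus_comp hΔ₀ hc' hcΔ.ne'⟩
end
end
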